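/- arXiv:0907.0497 — 3 statements merged into one kernel-verified Lean document; each statement's English description precedes it below -/
import Mathlib

section
/- Let φ₀ = dx¹²³ + dx¹⁴⁵ + dx¹⁶⁷ + dx²⁴⁶ − dx²⁵⁷ − dx³⁴⁷ − dx³⁵⁶ be the standard G₂ 3-form on ℝ⁷ with the Euclidean metric. If V ⊂ ℝ⁷ is a 4-dimensional linear subspace such that the restriction of φ₀ to V vanishes, then the restriction of the Hodge dual 4-form ∗φ₀ to V is nonzero. -/
/-!
Suppose `∗φ₀` also vanished on `V`, and let `f₀, …, f₃` be an orthonormal basis of `V`. The `G₂`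
cross product satisfies `φ₀(a, b, c) = ⟨a × b, c⟩` and
`⟨a × b, c × d⟩ = ⟨a, c⟩⟨b, d⟩ - ⟨a, d⟩⟨b, c⟩ + ∗φ₀(a, b, c, d)`. Hence `f₀ × f₁, f₀ × f₂, f₀ × f₃,
f₁ × f₂` are orthonormal and orthogonal to `V`, which gives eight orthonormal vectors in `ℝ⁷`.
-/

/-- The alternating 3-form `dx^i ∧ dx^j ∧ dx^k` on `ℝ⁷`, evaluated on three vectors. -/
def dx3 (i j k : Fin 7) (v w u : Fin 7 → ℝ) : ℝ :=
  Matrix.det !![v i, v j, v k; w i, w j, w k; u i, u j, u k]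

/-- The alternating 4-form `dx^i ∧ dx^j ∧ dx^k ∧ dx^l` on `ℝ⁷`. -/
def dx4 (i j k l : Fin 7) (v w u z : Fin 7 → ℝ) : ℝ :=
  Matrix.det !![v i, v j, v k, v l; w i, w j, w k, w l; u i, u j, u k, u l;
                z i, z j, z k, z l]

/-- The standard `G₂` 3-form
`φ₀ = dx¹²³ + dx¹⁴⁵ + dx¹⁶⁷ + dx²⁴⁶ − dx²⁵⁷ − dx³⁴⁷ − dx³⁵⁶` (0-indexed coordinates). -/
def phi0 (v w u : Fin 7 → ℝ) : ℝ :=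
  dx3 0 1 2 v w u + dx3 0 3 4 v w u + dx3 0 5 6 v w u + dx3 1 3 5 v w u
    - dx3 1 4 6 v w u - dx3 2 3 6 v w u - dx3 2 4 5 v w u

/-- The Hodge dual 4-form
`∗φ₀ = dx⁴⁵⁶⁷ + dx²³⁶⁷ + dx²³⁴⁵ + dx¹³⁵⁷ − dx¹³⁴⁶ − dx¹²⁵⁶ − dx¹²⁴⁷`
of `φ₀` with respect to the Euclidean metric and standard orientation on `ℝ⁷`
(0-indexed coordinates). -/
def starPhi0 (v w u z : Fin 7 → ℝ) : ℝ :=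
  dx4 3 4 5 6 v w u z + dx4 1 2 5 6 v w u z + dx4 1 2 3 4 v w u z
    + dx4 0 2 4 6 v w u z - dx4 0 2 3 5 v w u z - dx4 0 1 4 5 v w u z
    - dx4 0 1 3 6 v w u z

open Module Matrix

lemma dx3_eq (i j k : Fin 7) (v w u : Fin 7 → ℝ) :
    dx3 i j k v w u = v i * (w j * u k - w k * u j) - v j * (w i * u k - w k * u i)
      + v k * (w i * u j - w j * u i) := by
  simp [dx3, det_fin_three]
  ring

lemma dx4_eq (i j k l : Fin 7) (v w u z : Fin 7 → ℝ) :
    dx4 i j k l v w u z =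
      v i * (w j * (u k * z l - u l * z k) - w k * (u j * z l - u l * z j)
        + w l * (u j * z k - u k * z j))
      - v j * (w i * (u k * z l - u l * z k) - w k * (u i * z l - u l * z i)
        + w l * (u i * z k - u k * z i))
      + v k * (w i * (u j * z l - u l * z j) - w j * (u i * z l - u l * z i)
        + w l * (u i * z j - u j * z i))
      - v l * (w i * (u j * z k - u k * z j) - w j * (u i * z k - u k * z i)
        + w k * (u i * z j - u j * z i)) := by
  simp [dx4, det_succ_row_zero, Fin.sum_univ_succ, Fin.succAbove]
  ring

/-- The `G₂` cross product, read off from `φ₀(v, w, u) = (v × w) ⬝ᵥ u`. -/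
def g2Cross (v w : Fin 7 → ℝ) : Fin 7 → ℝ :=
  ![  (v 1 * w 2 - v 2 * w 1) + (v 3 * w 4 - v 4 * w 3) + (v 5 * w 6 - v 6 * w 5),
    - (v 0 * w 2 - v 2 * w 0) + (v 3 * w 5 - v 5 * w 3) - (v 4 * w 6 - v 6 * w 4),
      (v 0 * w 1 - v 1 * w 0) - (v 3 * w 6 - v 6 * w 3) - (v 4 * w 5 - v 5 * w 4),
    - (v 0 * w 4 - v 4 * w 0) - (v 1 * w 5 - v 5 * w 1) + (v 2 * w 6 - v 6 * w 2),
      (v 0 * w 3 - v 3 * w 0) + (v 1 * w 6 - v 6 * w 1) + (v 2 * w 5 - v 5 * w 2),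
    - (v 0 * w 6 - v 6 * w 0) + (v 1 * w 3 - v 3 * w 1) - (v 2 * w 4 - v 4 * w 2),
      (v 0 * w 5 - v 5 * w 0) - (v 1 * w 4 - v 4 * w 1) - (v 2 * w 3 - v 3 * w 2)]

lemma phi0_eq_g2Cross_dotProduct (v w u : Fin 7 → ℝ) : phi0 v w u = g2Cross v w ⬝ᵥ u := by
  simp only [phi0, dx3_eq, g2Cross, dotProduct, Fin.sum_univ_seven, cons_val]
  ring

lemma g2Cross_dotProduct_g2Cross (a b c d : Fin 7 → ℝ) :
    g2Cross a b ⬝ᵥ g2Cross c d = (a ⬝ᵥ c) * (b ⬝ᵥ d) - (a ⬝ᵥ d) * (b ⬝ᵥ c) + starPhi0 a b c d := by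
  simp only [starPhi0, dx4_eq, g2Cross, dotProduct, Fin.sum_univ_seven, cons_val]
  ring

section DotProduct

variable {R n ι : Type*} [CommRing R] [Fintype n] [DecidableEq ι]

lemma linearIndependent_of_dotProduct_eq_ite {v : ι → n → R}
    (hv : ∀ i j, v i ⬝ᵥ v j = if i = j then 1 else 0) : LinearIndependent R v := by
  rw [linearIndependent_iff']
  intro s g hg i hi
  have hgi := congrArg (· ⬝ᵥ v i) hg
  simpa [sum_dotProduct, smul_dotProduct, hv, hi] using hgi

lemma card_le_of_dotProduct_eq_ite [Nontrivial R] [Fintype ι] {v : ι → n → R}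
    (hv : ∀ i j, v i ⬝ᵥ v j = if i = j then 1 else 0) : Fintype.card ι ≤ Fintype.card n := by
  simpa using (linearIndependent_of_dotProduct_eq_ite hv).fintype_card_le_finrank

end DotProduct

lemma Submodule.exists_dotProduct_orthonormal {n : Type*} [Fintype n] {k : ℕ}
    (V : Submodule ℝ (n → ℝ)) (hV : finrank ℝ V = k) :
    ∃ f : Fin k → n → ℝ, (∀ i, f i ∈ V) ∧ ∀ i j, f i ⬝ᵥ f j = if i = j then 1 else 0 := by
  let V' : Submodule ℝ (EuclideanSpace ℝ n) :=
    V.comap (WithLp.linearEquiv 2 ℝ (n → ℝ)).toLinearMap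
  have hV' : finrank ℝ V' = k := by
    rw [show V' = _ from Submodule.comap_equiv_eq_map_symm _ _, LinearEquiv.finrank_map_eq, hV]
  let b := (stdOrthonormalBasis ℝ V').reindex (finCongr hV')
  refine ⟨fun i => WithLp.ofLp (b i : EuclideanSpace ℝ n), fun i => (b i).2, fun i j => ?_⟩
  have hbij := orthonormal_iff_ite.mp b.orthonormal i j
  rw [Submodule.coe_inner, PiLp.inner_apply] at hbij
  simpa [dotProduct, mul_comm] using hbij

/-- If `V ⊂ ℝ⁷` is a 4-dimensional linear subspace on which the standard `G₂` 3-form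
`φ₀` vanishes, then the restriction of `∗φ₀` to `V` is nonzero. -/
theorem starPhi0_ne_zero_on_coassociative (V : Submodule ℝ (Fin 7 → ℝ))
    (hV : Module.finrank ℝ V = 4)
    (hphi : ∀ v w u, v ∈ V → w ∈ V → u ∈ V → phi0 v w u = 0) :
    ∃ v w u z, v ∈ V ∧ w ∈ V ∧ u ∈ V ∧ z ∈ V ∧ starPhi0 v w u z ≠ 0 := by
  by_contra! hstar
  obtain ⟨f, hfV, hf⟩ := V.exists_dotProduct_orthonormal hV
  let p : Fin 4 → Fin 4 × Fin 4 := ![(0, 1), (0, 2), (0, 3), (1, 2)]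
  let c k := g2Cross (f (p k).1) (f (p k).2)
  have hfc : ∀ i k, f i ⬝ᵥ c k = 0 := fun i k => by
    rw [dotProduct_comm, ← phi0_eq_g2Cross_dotProduct]
    exact hphi _ _ _ (hfV _) (hfV _) (hfV i)
  have hc : ∀ k l, c k ⬝ᵥ c l = if k = l then 1 else 0 := by
    intro k l
    simp only [c, g2Cross_dotProduct_g2Cross, hf, hstar _ _ _ _ (hfV _) (hfV _) (hfV _) (hfV _)]
    fin_cases k <;> fin_cases l <;> simp [p]
  have hcard : Fintype.card (Fin 4 ⊕ Fin 4) ≤ Fintype.card (Fin 7) :=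
    card_le_of_dotProduct_eq_ite (v := Sum.elim f c) <| by
      rintro (i | i) (j | j) <;> simp [hf, hc, hfc, dotProduct_comm]
  simp at hcard
end

section
/- With α, β, γ as above, each of α, β, γ preserves the standard flat G₂ 3-form φ₀ = dx¹²³ + dx¹⁴⁵ + dx¹⁶⁷ + dx²⁴⁶ − dx²⁵⁷ − dx³⁴⁷ − dx³⁵⁶ on T⁷, i.e. α*φ₀ = β*φ₀ = γ*φ₀ = φ₀. -/
/-- Linear part of `α`: negates `x₄,…,x₇` (0-indexed `3,4,5,6`). -/
def Lalpha (x : Fin 7 → ℝ) : Fin 7 → ℝ := ![x 0, x 1, x 2, -x 3, -x 4, -x 5, -x 6]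

/-- Linear part of `β`: negates `x₂, x₃, x₆, x₇` (0-indexed `1,2,5,6`). -/
def Lbeta (x : Fin 7 → ℝ) : Fin 7 → ℝ := ![x 0, -x 1, -x 2, x 3, x 4, -x 5, -x 6]

/-- Linear part of `γ`: negates `x₁, x₃, x₅, x₇` (0-indexed `0,2,4,6`). -/
def Lgamma (x : Fin 7 → ℝ) : Fin 7 → ℝ := ![-x 0, x 1, -x 2, x 3, -x 4, x 5, -x 6]

/-! A diagonal linear map `x ↦ s * x` multiplies `dx^i ∧ dx^j ∧ dx^k` by `s i * s j * s k`, so it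
preserves `φ₀` once this product is `1` on each of the seven terms of `φ₀`. The linear parts of
`α`, `β`, `γ` are diagonal sign changes, and each of them flips an even number of the indices of
every term. -/

theorem dx3_mul (s v w u : Fin 7 → ℝ) (i j k : Fin 7) :
    dx3 i j k (s * v) (s * w) (s * u) = s i * s j * s k * dx3 i j k v w u := by
  simp only [dx3, Pi.mul_apply, Matrix.det_fin_three, Matrix.of_apply, Matrix.cons_val',
    Matrix.cons_val_zero, Matrix.cons_val_fin_one, Matrix.cons_val_one, Matrix.cons_val]
  ring

theorem phi0_mul_of_signs (s v w u : Fin 7 → ℝ)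
    (h012 : s 0 * s 1 * s 2 = 1) (h034 : s 0 * s 3 * s 4 = 1) (h056 : s 0 * s 5 * s 6 = 1)
    (h135 : s 1 * s 3 * s 5 = 1) (h146 : s 1 * s 4 * s 6 = 1) (h236 : s 2 * s 3 * s 6 = 1)
    (h245 : s 2 * s 4 * s 5 = 1) :
    phi0 (s * v) (s * w) (s * u) = phi0 v w u := by
  simp only [phi0, dx3_mul, h012, h034, h056, h135, h146, h236, h245, one_mul]

theorem Lalpha_eq_mul (x : Fin 7 → ℝ) : Lalpha x = ![1, 1, 1, -1, -1, -1, -1] * x := by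
  ext i; fin_cases i <;> simp [Lalpha]

theorem Lbeta_eq_mul (x : Fin 7 → ℝ) : Lbeta x = ![1, -1, -1, 1, 1, -1, -1] * x := by
  ext i; fin_cases i <;> simp [Lbeta]

theorem Lgamma_eq_mul (x : Fin 7 → ℝ) : Lgamma x = ![-1, 1, -1, 1, -1, 1, -1] * x := by
  ext i; fin_cases i <;> simp [Lgamma]

/-- Since `φ₀` has constant coefficients, the affine involutions `α`, `β`, `γ` of `T⁷` preserve it
exactly when their linear parts `Lalpha`, `Lbeta`, `Lgamma` preserve it on `ℝ⁷`. -/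
theorem alpha_beta_gamma_preserve_phi0 :
    (∀ v w u, phi0 (Lalpha v) (Lalpha w) (Lalpha u) = phi0 v w u) ∧
    (∀ v w u, phi0 (Lbeta v) (Lbeta w) (Lbeta u) = phi0 v w u) ∧
    (∀ v w u, phi0 (Lgamma v) (Lgamma w) (Lgamma u) = phi0 v w u) := by
  refine ⟨fun v w u => ?_, fun v w u => ?_, fun v w u => ?_⟩ <;>
    simp only [Lalpha_eq_mul, Lbeta_eq_mul, Lgamma_eq_mul] <;>
    apply phi0_mul_of_signs <;> simp
end

section
/- Let X be a Banach space, B₊, B₋ closed subspaces with X = B₊ ⊕ B₋, and let x(t) = x₊(t) + x₋(t) be a continuously differentiable path in X defined for t ≥ t₀ with x(t) → 0 as t → ∞. Suppose there are constants μ > 2k > 0 such that for all t ≥ t₀: (d/dt)‖x₊(t)‖ ≥ μ‖x₊(t)‖ − k‖x(t)‖ and (d/dt)‖x₋(t)‖ ≤ −μ‖x₋(t)‖ + k‖x(t)‖ wherever these norms are differentiable, and ‖x(t)‖ ≤ ‖x₊(t)‖ + ‖x₋(t)‖. Then ‖x(t)‖ = O(e^{(−μ+2k)t}) as t → ∞.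 -/
/-!
The gap `‖x₊‖ − ‖x₋‖` has derivative at least `μ(‖x₊‖ + ‖x₋‖) − 2k‖x‖ ≥ (μ − 2k)‖x‖ ≥ 0`, so it
is nondecreasing; since the projections onto `B₊` and `B₋` are continuous it tends to `0`, hence
it is nonpositive and `‖x‖ ≤ 2‖x₋‖`. Then `(d/dt)‖x₋‖ ≤ (−μ + 2k)‖x₋‖`, and Grönwall's inequality
gives the exponential bound.
-/

open Filter Set Topology

namespace Submodule.IsTopCompl

variable {R M ι : Type*} [Ring R] [TopologicalSpace M] [AddCommGroup M] [Module R M]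
  {p q : Submodule R M} {l : Filter ι} {x y z : ι → M}

theorem tendsto_zero_left (h : IsTopCompl p q) (hy : ∀ᶠ i in l, y i ∈ p)
    (hz : ∀ᶠ i in l, z i ∈ q) (hx : ∀ᶠ i in l, x i = y i + z i) (hlim : Tendsto x l (𝓝 0)) :
    Tendsto y l (𝓝 0) := by
  have hproj : ∀ᶠ i in l, p.projectionL q h (x i) = y i := by
    filter_upwards [hy, hz, hx] with i hyi hzi hxi
    rw [hxi, map_add, projectionL_apply_left h ⟨_, hyi⟩,
      projectionL_apply_eq_zero_of_mem_right h hzi, add_zero]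
  exact (((p.projectionL q h).continuous.tendsto' 0 0 (map_zero _)).comp hlim).congr' hproj

theorem tendsto_zero_right [ContinuousSub M] (h : IsTopCompl p q) (hy : ∀ᶠ i in l, y i ∈ p)
    (hz : ∀ᶠ i in l, z i ∈ q) (hx : ∀ᶠ i in l, x i = y i + z i) (hlim : Tendsto x l (𝓝 0)) :
    Tendsto z l (𝓝 0) :=
  h.symm.tendsto_zero_left hz hy (hx.mono fun _ hi => hi.trans (add_comm _ _)) hlim

end Submodule.IsTopCompl

theorem MonotoneOn.le_of_tendsto_atTop {α β : Type*} [Preorder α] [IsDirected α (· ≤ ·)]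
    [TopologicalSpace β] [Preorder β] [OrderClosedTopology β] {f : α → β} {a t : α} {L : β}
    (hf : MonotoneOn f (Ici a)) (hlim : Tendsto f atTop (𝓝 L)) (ht : a ≤ t) : f t ≤ L :=
  haveI : Nonempty α := ⟨a⟩
  ge_of_tendsto hlim <| (eventually_ge_atTop t).mono fun _ hs => hf ht (ht.trans hs) hs

theorem monotoneOn_Ici_of_hasDerivAt_nonneg {f f' : ℝ → ℝ} {a : ℝ}
    (hf : ∀ t, a ≤ t → HasDerivAt f (f' t) t) (hf' : ∀ t, a ≤ t → 0 ≤ f' t) :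
    MonotoneOn f (Ici a) := by
  refine monotoneOn_of_hasDerivWithinAt_nonneg (f' := f') (convex_Ici a)
    (fun t ht => (hf t ht).continuousAt.continuousWithinAt) (fun t ht => ?_) fun t ht => ?_
  all_goals rw [interior_Ici] at ht
  exacts [(hf t (le_of_lt ht)).hasDerivWithinAt, hf' t (le_of_lt ht)]

theorem le_mul_exp_of_hasDerivAt_le_mul {f f' : ℝ → ℝ} {a K t : ℝ}
    (hf : ∀ s, a ≤ s → HasDerivAt f (f' s) s) (hf' : ∀ s, a ≤ s → f' s ≤ K * f s) (ht : a ≤ t) :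
    f t ≤ f a * Real.exp (K * (t - a)) := by
  rw [← gronwallBound_ε0]
  refine le_gronwallBound_of_liminf_deriv_right_le (f' := f') (ε := 0) (b := t)
    (fun s hs => (hf s hs.1).continuousAt.continuousWithinAt) (fun s hs r hr => ?_) le_rfl
    (fun s hs => by simpa using hf' s hs.1) t ⟨ht, le_rfl⟩
  simpa [slope_def_field, div_eq_inv_mul] using
    (hf s hs.1).hasDerivWithinAt.liminf_right_slope_le hr

theorem exponential_decay_hyperbolic_flow_general
    {X : Type*} [NormedAddCommGroup X] [NormedSpace ℝ X] [CompleteSpace X]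
    (Bp Bm : Submodule ℝ X) (hBp : IsClosed (Bp : Set X)) (hBm : IsClosed (Bm : Set X))
    (hcompl : IsCompl Bp Bm)
    (μ k t₀ : ℝ) (hk : 0 < k) (hμ : 2 * k < μ)
    (x xp xm : ℝ → X) (np nm : ℝ → ℝ)
    (hmemp : ∀ t, t₀ ≤ t → xp t ∈ Bp) (hmemm : ∀ t, t₀ ≤ t → xm t ∈ Bm)
    (hsum : ∀ t, t₀ ≤ t → x t = xp t + xm t)
    (hlim : Tendsto x atTop (nhds 0))
    (hdp : ∀ t, t₀ ≤ t → HasDerivAt (fun u => ‖xp u‖) (np t) t)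
    (hdm : ∀ t, t₀ ≤ t → HasDerivAt (fun u => ‖xm u‖) (nm t) t)
    (hineqp : ∀ t, t₀ ≤ t → μ * ‖xp t‖ - k * ‖x t‖ ≤ np t)
    (hineqm : ∀ t, t₀ ≤ t → nm t ≤ -μ * ‖xm t‖ + k * ‖x t‖)
    (htri : ∀ t, t₀ ≤ t → ‖x t‖ ≤ ‖xp t‖ + ‖xm t‖) :
    ∃ C : ℝ, ∀ t, t₀ ≤ t → ‖x t‖ ≤ C * Real.exp ((-μ + 2 * k) * t) := by
  have hTop := Submodule.IsCompl.isTopCompl_of_isClosed hcompl hBp hBm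
  have hp := eventually_atTop.2 ⟨t₀, hmemp⟩
  have hm := eventually_atTop.2 ⟨t₀, hmemm⟩
  have hs := eventually_atTop.2 ⟨t₀, hsum⟩
  have hgap_lim : Tendsto (fun t => ‖xp t‖ - ‖xm t‖) atTop (𝓝 0) := by
    simpa using (hTop.tendsto_zero_left hp hm hs hlim).norm.sub
      (hTop.tendsto_zero_right hp hm hs hlim).norm
  have hgap_mono : MonotoneOn (fun t => ‖xp t‖ - ‖xm t‖) (Ici t₀) :=
    monotoneOn_Ici_of_hasDerivAt_nonneg (fun t ht => (hdp t ht).sub (hdm t ht)) fun t ht => by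
      nlinarith [hineqp t ht, hineqm t ht, htri t ht, norm_nonneg (x t)]
  have hx_le : ∀ t, t₀ ≤ t → ‖x t‖ ≤ 2 * ‖xm t‖ := fun t ht => by
    linarith [hgap_mono.le_of_tendsto_atTop hgap_lim ht, htri t ht]
  have hxm_decay : ∀ t, t₀ ≤ t → ‖xm t‖ ≤ ‖xm t₀‖ * Real.exp ((-μ + 2 * k) * (t - t₀)) :=
    fun t => le_mul_exp_of_hasDerivAt_le_mul hdm fun s hs => by
      nlinarith [hineqm s hs, hx_le s hs]
  refine ⟨2 * ‖xm t₀‖ * Real.exp ((μ - 2 * k) * t₀), fun t ht => ?_⟩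
  calc ‖x t‖ ≤ 2 * (‖xm t₀‖ * Real.exp ((-μ + 2 * k) * (t - t₀))) := by
        linarith [hx_le t ht, hxm_decay t ht]
    _ = 2 * ‖xm t₀‖ * Real.exp ((μ - 2 * k) * t₀) * Real.exp ((-μ + 2 * k) * t) := by
        rw [mul_assoc, ← Real.exp_add]; ring_nf

/-- Abstract exponential decay for a flow near a hyperbolic fixed point.
Let `X` be a Banach space, `B₊, B₋` closed complementary subspaces, and
`x(t) = x₊(t) + x₋(t)` a path defined for `t ≥ t₀` with `x(t) → 0` as `t → ∞`.
Suppose `μ > 2k > 0` and the norms satisfy `(d/dt)‖x₊‖ ≥ μ‖x₊‖ − k‖x‖`,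
`(d/dt)‖x₋‖ ≤ −μ‖x₋‖ + k‖x‖` and `‖x‖ ≤ ‖x₊‖ + ‖x₋‖`.
Then `‖x(t)‖ = O(e^{(−μ+2k)t})` as `t → ∞`. -/
theorem exponential_decay_hyperbolic_flow
    {X : Type*} [NormedAddCommGroup X] [NormedSpace ℝ X] [CompleteSpace X]
    (Bp Bm : Submodule ℝ X) (hBp : IsClosed (Bp : Set X)) (hBm : IsClosed (Bm : Set X))
    (hcompl : IsCompl Bp Bm)
    (μ k t₀ : ℝ) (hk : 0 < k) (hμ : 2 * k < μ)
    (x xp xm : ℝ → X) (np nm : ℝ → ℝ)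
    (hmemp : ∀ t, t₀ ≤ t → xp t ∈ Bp) (hmemm : ∀ t, t₀ ≤ t → xm t ∈ Bm)
    (hsum : ∀ t, t₀ ≤ t → x t = xp t + xm t)
    (hC1 : ContDiffOn ℝ 1 x (Set.Ici t₀))
    (hlim : Tendsto x atTop (nhds 0))
    (hdp : ∀ t, t₀ ≤ t → HasDerivAt (fun u => ‖xp u‖) (np t) t)
    (hdm : ∀ t, t₀ ≤ t → HasDerivAt (fun u => ‖xm u‖) (nm t) t)
    (hineqp : ∀ t, t₀ ≤ t → μ * ‖xp t‖ - k * ‖x t‖ ≤ np t)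
    (hineqm : ∀ t, t₀ ≤ t → nm t ≤ -μ * ‖xm t‖ + k * ‖x t‖)
    (htri : ∀ t, t₀ ≤ t → ‖x t‖ ≤ ‖xp t‖ + ‖xm t‖) :
    ∃ C : ℝ, ∀ t, t₀ ≤ t → ‖x t‖ ≤ C * Real.exp ((-μ + 2 * k) * t) :=
  exponential_decay_hyperbolic_flow_general Bp Bm hBp hBm hcompl μ k t₀ hk hμ x xp xm np nm hmemp
    hmemm hsum hlim hdp hdm hineqp hineqm htri
end
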